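/- arXiv:0803.3062 — 3 statements merged into one kernel-verified Lean document; each statement's English description precedes it below -/
import Mathlib

section
/- Let M be a compact Riemannian manifold with boundary that is simple (any two points are joined by a unique geodesic, depending smoothly on endpoints, contained in M). Let K ⊆ M be a closed geodesically convex subset (for any two points of K, the geodesic segment joining them lies in K). Then for every point x ∈ M \ K, there exists a maximal geodesic through x that does not intersect K. -/
/-!
Let `L` be the set of unit directions `ξ` whose forward geodesic ray from `x` meets `K`. Since
rays have bounded length and `K` is closed, `L` is compact. By convexity `L` and `-L` are
disjoint: otherwise `x`, which lies between the two hitting points, would be in `K`. The unit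
sphere is connected for `n ≥ 2`, so it is not covered by the disjoint closed sets `L` and `-L`,
and any uncovered direction gives a geodesic missing `K` in both directions.
-/

open Set Pointwise

theorem IsConnected.exists_notMem_and_neg_notMem {E : Type*} [TopologicalSpace E]
    [InvolutiveNeg E] [ContinuousNeg E] {S L : Set E} (hS : IsConnected S)
    (hS_neg : ∀ ξ ∈ S, -ξ ∈ S) (hL : IsClosed L) (hL_disj : ∀ ξ ∈ S, ξ ∈ L → -ξ ∉ L) :
    ∃ ξ ∈ S, ξ ∉ L ∧ -ξ ∉ L := by
  by_contra! hcover
  have hS_sub : S ⊆ L ∪ -L := fun ξ hξ => by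
    by_cases h : ξ ∈ L
    · exact .inl h
    · exact .inr (mem_neg.mpr (hcover ξ hξ h))
  obtain ⟨ξ₀, hξ₀⟩ := hS.nonempty
  have hmeets : (S ∩ L).Nonempty ∧ (S ∩ -L).Nonempty := by
    rcases hS_sub hξ₀ with h | h
    · exact ⟨⟨ξ₀, hξ₀, h⟩, ⟨-ξ₀, hS_neg ξ₀ hξ₀, by rwa [mem_neg, neg_neg]⟩⟩
    · exact ⟨⟨-ξ₀, hS_neg ξ₀ hξ₀, h⟩, ⟨ξ₀, hξ₀, h⟩⟩
  obtain ⟨ξ, hξS, hξL, hξL'⟩ :=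
    isPreconnected_closed_iff.mp hS.isPreconnected L (-L) hL hL.neg hS_sub hmeets.1 hmeets.2
  exact hL_disj ξ hξS hξL hξL'

theorem IsCompact.isCompact_setOf_exists_mem_Icc {X Y : Type*} [TopologicalSpace X]
    [TopologicalSpace Y] {S : Set X} (hS : IsCompact S) {K : Set Y} (hK : IsClosed K)
    {f : X → ℝ → Y} (hf : Continuous (Function.uncurry f)) (a b : ℝ) :
    IsCompact {ξ ∈ S | ∃ t ∈ Icc a b, f ξ t ∈ K} := by
  have hcpt : IsCompact (S ×ˢ Icc a b ∩ Function.uncurry f ⁻¹' K) :=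
    (hS.prod isCompact_Icc).inter_right (hK.preimage hf)
  convert hcpt.image continuous_fst using 1
  ext ξ
  constructor
  · rintro ⟨hξ, t, ht, htK⟩
    exact ⟨(ξ, t), ⟨⟨hξ, ht⟩, htK⟩, rfl⟩
  · rintro ⟨⟨ξ, t⟩, ⟨⟨hξ, ht⟩, htK⟩, rfl⟩
    exact ⟨hξ, t, ht, htK⟩

theorem isConnected_sphere_euclideanSpace {n : ℕ} (hn : 2 ≤ n) :
    IsConnected (Metric.sphere (0 : EuclideanSpace ℝ (Fin n)) 1) := by
  refine isConnected_sphere ?_ 0 zero_le_one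
  rw [← Module.finrank_eq_rank, finrank_euclideanSpace_fin]
  exact_mod_cast hn

theorem geodesic_avoiding_convex_set_general {n : ℕ} (hn : 2 ≤ n)
    (M : Set (EuclideanSpace ℝ (Fin n)))
    (geo : EuclideanSpace ℝ (Fin n) → EuclideanSpace ℝ (Fin n) → ℝ →
      EuclideanSpace ℝ (Fin n))
    (hgeo_cont : Continuous fun q : EuclideanSpace ℝ (Fin n) ×
      EuclideanSpace ℝ (Fin n) × ℝ => geo q.1 q.2.1 q.2.2)
    (hgeo_zero : ∀ x ξ, geo x ξ 0 = x)
    (hgeo_neg : ∀ x ξ t, geo x (-ξ) t = geo x ξ (-t))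
    (T : ℝ)
    (hgeo_bdd : ∀ x ∈ M, ∀ ξ : EuclideanSpace ℝ (Fin n), ‖ξ‖ = 1 →
      ∀ t : ℝ, geo x ξ t ∈ M → |t| ≤ T)
    (K : Set (EuclideanSpace ℝ (Fin n))) (hKM : K ⊆ M) (hKcl : IsClosed K)
    (hKconv : ∀ x ∈ M, ∀ ξ : EuclideanSpace ℝ (Fin n), ‖ξ‖ = 1 →
      ∀ t₁ t₂ : ℝ, t₁ ≤ t₂ → geo x ξ t₁ ∈ K → geo x ξ t₂ ∈ K →
        ∀ t ∈ Set.Icc t₁ t₂, geo x ξ t ∈ K)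
    (x : EuclideanSpace ℝ (Fin n)) (hx : x ∈ M \ K) :
    ∃ ξ : EuclideanSpace ℝ (Fin n), ‖ξ‖ = 1 ∧ ∀ t : ℝ, geo x ξ t ∉ K := by
  obtain ⟨hxM, hxK⟩ := hx
  set S := Metric.sphere (0 : EuclideanSpace ℝ (Fin n)) 1
  set L := {ξ ∈ S | ∃ t ∈ Icc 0 T, geo x ξ t ∈ K}
  have hgeo_x : Continuous (Function.uncurry (geo x)) :=
    hgeo_cont.comp (by fun_prop : Continuous fun p : EuclideanSpace ℝ (Fin n) × ℝ => (x, p))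
  have hL_closed : IsClosed L :=
    ((isCompact_sphere 0 1).isCompact_setOf_exists_mem_Icc hKcl hgeo_x 0 T).isClosed
  have hS_neg : ∀ ξ ∈ S, -ξ ∈ S := fun ξ hξ =>
    mem_sphere_zero_iff_norm.mpr ((norm_neg ξ).trans (mem_sphere_zero_iff_norm.mp hξ))
  have hL_disj : ∀ ξ ∈ S, ξ ∈ L → -ξ ∉ L := by
    rintro ξ hξ ⟨-, t₂, ht₂, ht₂K⟩ ⟨-, t₁, ht₁, ht₁K⟩
    rw [hgeo_neg] at ht₁K
    have hx0 := hKconv x hxM ξ (mem_sphere_zero_iff_norm.mp hξ) (-t₁) t₂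
      (by linarith [ht₁.1, ht₂.1]) ht₁K ht₂K 0 ⟨by linarith [ht₁.1], ht₂.1⟩
    exact hxK (hgeo_zero x ξ ▸ hx0)
  have hray : ∀ ξ ∈ S, ∀ t, 0 ≤ t → geo x ξ t ∈ K → ξ ∈ L := fun ξ hξ t ht htK =>
    ⟨hξ, t, ⟨ht, (abs_le.mp (hgeo_bdd x hxM ξ (mem_sphere_zero_iff_norm.mp hξ) t (hKM htK))).2⟩,
      htK⟩
  obtain ⟨ξ, hξ, hξL, hξL'⟩ :=
    (isConnected_sphere_euclideanSpace hn).exists_notMem_and_neg_notMem hS_neg hL_closed hL_disj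
  refine ⟨ξ, mem_sphere_zero_iff_norm.mp hξ, fun t htK => ?_⟩
  rcases le_or_gt 0 t with ht | ht
  · exact hξL (hray ξ hξ t ht htK)
  · exact hξL' (hray (-ξ) (hS_neg ξ hξ) (-t) (by linarith) (by rwa [hgeo_neg, neg_neg]))

/-- Let `M` be a compact (simple) Riemannian manifold with boundary, in
which any two points are joined by a unique geodesic contained in `M`.  We model the
geodesic structure by a continuous family `geo x ξ : ℝ → ℝⁿ` of unit-speed maximal
geodesics through `x ∈ M` in the unit direction `ξ`, with `geo x ξ 0 = x`, with the
reversal property `geo x (−ξ) t = geo x ξ (−t)`, and with uniformly bounded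
parameter interval inside the compact set `M` (finite length).  A closed set
`K ⊆ M` is geodesically convex: whenever two points of a geodesic lie in `K`, the
whole geodesic segment between them lies in `K` (uniqueness of connecting
geodesics).  Then through every `x ∈ M \ K` there is a maximal geodesic that does
not intersect `K`. -/
theorem geodesic_avoiding_convex_set {n : ℕ} (hn : 2 ≤ n)
    (M : Set (EuclideanSpace ℝ (Fin n))) (hMcp : IsCompact M)
    (geo : EuclideanSpace ℝ (Fin n) → EuclideanSpace ℝ (Fin n) → ℝ →
      EuclideanSpace ℝ (Fin n))
    (hgeo_cont : Continuous fun q : EuclideanSpace ℝ (Fin n) ×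
      EuclideanSpace ℝ (Fin n) × ℝ => geo q.1 q.2.1 q.2.2)
    (hgeo_zero : ∀ x ξ, geo x ξ 0 = x)
    (hgeo_neg : ∀ x ξ t, geo x (-ξ) t = geo x ξ (-t))
    (T : ℝ) (hT : 0 < T)
    (hgeo_bdd : ∀ x ∈ M, ∀ ξ : EuclideanSpace ℝ (Fin n), ‖ξ‖ = 1 →
      ∀ t : ℝ, geo x ξ t ∈ M → |t| ≤ T)
    (K : Set (EuclideanSpace ℝ (Fin n))) (hKM : K ⊆ M) (hKcl : IsClosed K)
    (hKconv : ∀ x ∈ M, ∀ ξ : EuclideanSpace ℝ (Fin n), ‖ξ‖ = 1 →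
      ∀ t₁ t₂ : ℝ, t₁ ≤ t₂ → geo x ξ t₁ ∈ K → geo x ξ t₂ ∈ K →
        ∀ t ∈ Set.Icc t₁ t₂, geo x ξ t ∈ K)
    (x : EuclideanSpace ℝ (Fin n)) (hx : x ∈ M \ K) :
    ∃ ξ : EuclideanSpace ℝ (Fin n), ‖ξ‖ = 1 ∧ ∀ t : ℝ, geo x ξ t ∉ K :=
  geodesic_avoiding_convex_set_general hn M geo hgeo_cont hgeo_zero hgeo_neg T hgeo_bdd K hKM hKcl
    hKconv x hx
end

section
/- Let B be the closed unit ball in ℝⁿ with n ≥ 2, and let K ⊆ B be a closed convex subset. Then for every x ∈ B \ K there exists a line through x that does not intersect K. -/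
open Module

/-- Strictly separating `x` from `K` by a functional `f`, every line through `x` in a direction of
`ker f` stays in the level set `f = f x`, which misses `K`. -/
theorem Convex.exists_ne_zero_forall_add_smul_notMem {E : Type*} [NormedAddCommGroup E]
    [NormedSpace ℝ E] [FiniteDimensional ℝ E] (hE : 1 < finrank ℝ E) {K : Set E}
    (hKcv : Convex ℝ K) (hKcl : IsClosed K) {x : E} (hx : x ∉ K) :
    ∃ v ≠ 0, ∀ t : ℝ, x + t • v ∉ K := by
  obtain ⟨f, u, hfx, hfK⟩ := geometric_hahn_banach_point_closed hKcv hKcl hx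
  have hker : LinearMap.ker (f : E →ₗ[ℝ] ℝ) ≠ ⊥ :=
    LinearMap.ker_ne_bot_of_finrank_lt (by rwa [finrank_self])
  obtain ⟨v, hv, hv0⟩ := Submodule.exists_mem_ne_zero_of_ne_bot hker
  refine ⟨v, hv0, fun t ht => ?_⟩
  have hfv : f v = 0 := hv
  have hline : f (x + t • v) = f x := by simp [hfv]
  linarith [hfK _ ht]

theorem line_avoiding_convex_set_general {n : ℕ} (hn : 2 ≤ n)
    (K : Set (EuclideanSpace ℝ (Fin n)))
    (hKcl : IsClosed K) (hKcv : Convex ℝ K)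
    (x : EuclideanSpace ℝ (Fin n))
    (hx : x ∈ Metric.closedBall (0 : EuclideanSpace ℝ (Fin n)) 1 \ K) :
    ∃ ξ : EuclideanSpace ℝ (Fin n), ‖ξ‖ = 1 ∧ ∀ t : ℝ, x + t • ξ ∉ K := by
  obtain ⟨v, hv0, hline⟩ :=
    hKcv.exists_ne_zero_forall_add_smul_notMem (by rw [finrank_euclideanSpace_fin]; omega)
      hKcl hx.2
  refine ⟨‖v‖⁻¹ • v, norm_smul_inv_norm hv0, fun t => ?_⟩
  simpa only [smul_smul] using hline (t * ‖v‖⁻¹)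

/-- Let `B` be the closed unit ball in `ℝⁿ` with `n ≥ 2`, and let
`K ⊆ B` be a closed convex subset. Then for every `x ∈ B \ K` there exists a line
through `x` that does not intersect `K`. -/
theorem line_avoiding_convex_set {n : ℕ} (hn : 2 ≤ n)
    (K : Set (EuclideanSpace ℝ (Fin n)))
    (hKB : K ⊆ Metric.closedBall 0 1) (hKcl : IsClosed K) (hKcv : Convex ℝ K)
    (x : EuclideanSpace ℝ (Fin n))
    (hx : x ∈ Metric.closedBall (0 : EuclideanSpace ℝ (Fin n)) 1 \ K) :
    ∃ ξ : EuclideanSpace ℝ (Fin n), ‖ξ‖ = 1 ∧ ∀ t : ℝ, x + t • ξ ∉ K :=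
  line_avoiding_convex_set_general hn K hKcl hKcv x hx
end

section
/- Let B be the closed unit ball in ℝⁿ with n ≥ 2, let K ⊆ interior(B) be closed and convex, and let x ∈ B \ K. Then the chord through x avoiding K (which exists by the avoidance lemma) can be continuously deformed, through chords of B avoiding K, to a point of ∂B. Concretely: there exist continuous maps a, b : [0,1] → ∂B such that the chord [a(0), b(0)] contains x, every chord [a(t), b(t)] is disjoint from K, and a(1) = b(1). -/
/-!
Separate `x` from `K` by a unit vector `u`, so that `K` lies in the open half-space
`⟪u, ·⟫ < ⟪u, x⟫`. Since `n ≥ 2`, the hyperplane `⟪u, ·⟫ = ⟪u, x⟫` contains a chord through `x`.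
Sliding both endpoints along their meridians towards the pole `u`, at a common height rising from
`⟪u, x⟫` to `1`, keeps every chord inside a hyperplane `⟪u, ·⟫ = s` with `s ≥ ⟪u, x⟫`, hence off
`K`, and ends with both endpoints at `u`.
-/

open RealInnerProductSpace Set

variable {E : Type*} [NormedAddCommGroup E] [InnerProductSpace ℝ E]

theorem exists_unit_inner_lt_of_notMem [CompleteSpace E] [Nontrivial E] {K : Set E}
    (hKcv : Convex ℝ K) (hKcl : IsClosed K) {x : E} (hx : x ∉ K) :
    ∃ u : E, ‖u‖ = 1 ∧ ∀ y ∈ K, ⟪u, y⟫ < ⟪u, x⟫ := by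
  rcases K.eq_empty_or_nonempty with rfl | ⟨y₀, hy₀⟩
  · obtain ⟨u, hu⟩ := exists_norm_eq E zero_le_one
    exact ⟨u, hu, by simp⟩
  obtain ⟨f, c, hfK, hfx⟩ := geometric_hahn_banach_closed_point hKcv hKcl hx
  set φ := (InnerProductSpace.toDual ℝ E).symm f
  have hφ : ∀ z, ⟪φ, z⟫ = f z := fun z => InnerProductSpace.toDual_symm_apply
  have hφ₀ : φ ≠ 0 := by
    rintro h
    have h₀ := (hfK y₀ hy₀).trans hfx
    simp only [← hφ, h, inner_zero_left, lt_self_iff_false] at h₀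
  refine ⟨‖φ‖⁻¹ • φ, norm_smul_inv_norm hφ₀, fun y hy => ?_⟩
  simp only [real_inner_smul_left, hφ]
  exact mul_lt_mul_of_pos_left ((hfK y hy).trans hfx) (inv_pos.2 (norm_pos_iff.2 hφ₀))

theorem exists_unit_inner_eq_zero [FiniteDimensional ℝ E] (hE : 2 ≤ Module.finrank ℝ E) (u : E) :
    ∃ v : E, ‖v‖ = 1 ∧ ⟪u, v⟫ = 0 := by
  have hpos : 0 < Module.finrank ℝ (ℝ ∙ u)ᗮ := by
    have hsum := (ℝ ∙ u).finrank_add_finrank_orthogonal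
    have hline : Module.finrank ℝ (ℝ ∙ u) ≤ 1 := by simpa using finrank_span_le_card ({u} : Set E)
    omega
  have := Module.finrank_pos_iff.1 hpos
  obtain ⟨v, hv⟩ := exists_norm_eq (ℝ ∙ u)ᗮ zero_le_one
  exact ⟨v, hv, Submodule.inner_right_of_mem_orthogonal (Submodule.mem_span_singleton_self u) v.2⟩

theorem exists_nonneg_norm_add_smul_eq_one {x v : E} (hx : ‖x‖ ≤ 1) (hv : ‖v‖ = 1) :
    ∃ τ : ℝ, 0 ≤ τ ∧ ‖x + τ • v‖ = 1 := by
  have hcont : ContinuousOn (fun τ : ℝ => ‖x + τ • v‖) (Icc 0 2) := by fun_prop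
  have h₂ : 1 ≤ ‖x + (2 : ℝ) • v‖ := by
    have := norm_sub_le (x + (2 : ℝ) • v) x
    rw [add_sub_cancel_left, norm_smul, hv] at this
    norm_num at this
    linarith
  obtain ⟨τ, hτ, hτ₁⟩ := intermediate_value_Icc zero_le_two hcont ⟨by simpa using hx, h₂⟩
  exact ⟨τ, hτ.1, hτ₁⟩

theorem exists_chord_through_in_hyperplane [FiniteDimensional ℝ E]
    (hE : 2 ≤ Module.finrank ℝ E) (u : E) {x : E} (hx : ‖x‖ ≤ 1) :
    ∃ a b : E, ‖a‖ = 1 ∧ ‖b‖ = 1 ∧ ⟪u, a⟫ = ⟪u, x⟫ ∧ ⟪u, b⟫ = ⟪u, x⟫ ∧ x ∈ segment ℝ a b := by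
  obtain ⟨v, hv, huv⟩ := exists_unit_inner_eq_zero hE u
  obtain ⟨s, hs, ha⟩ := exists_nonneg_norm_add_smul_eq_one hx (by rwa [norm_neg] : ‖-v‖ = 1)
  obtain ⟨t, ht, hb⟩ := exists_nonneg_norm_add_smul_eq_one hx hv
  refine ⟨x + s • -v, x + t • v, ha, hb, by simp [inner_add_right, real_inner_smul_right, huv],
    by simp [inner_add_right, real_inner_smul_right, huv], ?_⟩
  rw [mem_segment_iff_sameRay, smul_neg, sub_add_eq_sub_sub, sub_self, zero_sub, neg_neg,
    add_sub_cancel_left]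
  exact (SameRay.sameRay_nonneg_smul_left v hs).nonneg_smul_right ht

/-- With `u` as pole, the point at height `s` on the meridian through `a`: the component of `a`
orthogonal to `u` is rescaled to length `√(1 - s ^ 2)`. -/
noncomputable def meridianPoint (u a : E) (s : ℝ) : E :=
  s • u + √((1 - s ^ 2) / (1 - ⟪u, a⟫ ^ 2)) • (a - ⟪u, a⟫ • u)

section meridianPoint

variable {u a : E}

theorem continuous_meridianPoint : Continuous (meridianPoint u a) := by
  unfold meridianPoint; fun_prop

theorem meridianPoint_one : meridianPoint u a 1 = u := by
  simp [meridianPoint]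

theorem meridianPoint_inner (ha : |⟪u, a⟫| < 1) : meridianPoint u a ⟪u, a⟫ = a := by
  have : 1 - ⟪u, a⟫ ^ 2 ≠ 0 := by nlinarith [abs_lt.1 ha]
  simp [meridianPoint, div_self this]

theorem inner_meridianPoint (hu : ‖u‖ = 1) (s : ℝ) : ⟪u, meridianPoint u a s⟫ = s := by
  simp [meridianPoint, inner_add_right, inner_sub_right, real_inner_smul_right, hu]

theorem norm_meridianPoint (hu : ‖u‖ = 1) (ha : ‖a‖ = 1) (hua : |⟪u, a⟫| < 1) {s : ℝ}
    (hs : |s| ≤ 1) :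
    ‖meridianPoint u a s‖ = 1 := by
  set ξ := ⟪u, a⟫
  have hξ : 0 < 1 - ξ ^ 2 := by nlinarith [abs_lt.1 hua]
  have hs' : 0 ≤ 1 - s ^ 2 := by nlinarith [abs_le.1 hs]
  have hperp : ⟪u, a - ξ • u⟫ = 0 := by simp [inner_sub_right, real_inner_smul_right, hu, ξ]
  have hp : ‖a - ξ • u‖ ^ 2 = 1 - ξ ^ 2 := by
    rw [norm_sub_sq_real, ha, norm_smul, hu, real_inner_smul_right, real_inner_comm]
    rw [Real.norm_eq_abs, mul_one, sq_abs]; ring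
  rw [← pow_eq_one_iff_of_nonneg (norm_nonneg _) two_ne_zero, meridianPoint, norm_add_sq_real,
    real_inner_smul_left, real_inner_smul_right, hperp, norm_smul, norm_smul, mul_pow, mul_pow, hp,
    hu, Real.norm_eq_abs, Real.norm_eq_abs, sq_abs, sq_abs, Real.sq_sqrt (div_nonneg hs' hξ.le)]
  field_simp
  ring

end meridianPoint

theorem exists_chord_homotopy_to_point {K : Set E} {u a b : E} (hu : ‖u‖ = 1) (ha : ‖a‖ = 1)
    (hb : ‖b‖ = 1) (hab : ⟪u, a⟫ = ⟪u, b⟫) (hua : |⟪u, a⟫| < 1) (hK : ∀ y ∈ K, ⟪u, y⟫ < ⟪u, a⟫) :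
    ∃ A B : ℝ → E, Continuous A ∧ Continuous B ∧ (∀ t ∈ Icc (0 : ℝ) 1, ‖A t‖ = 1 ∧ ‖B t‖ = 1) ∧
      A 0 = a ∧ B 0 = b ∧ (∀ t ∈ Icc (0 : ℝ) 1, Disjoint (segment ℝ (A t) (B t)) K) ∧
      A 1 = B 1 := by
  set ξ := ⟪u, a⟫
  set height : ℝ → ℝ := fun t => ξ + t * (1 - ξ)
  have hheight : Continuous height := by fun_prop
  have hmem : ∀ t ∈ Icc (0 : ℝ) 1, ξ ≤ height t ∧ |height t| ≤ 1 := fun t ⟨ht₀, ht₁⟩ => by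
    have := abs_lt.1 hua
    refine ⟨?_, abs_le.2 ⟨?_, ?_⟩⟩ <;> nlinarith
  refine ⟨meridianPoint u a ∘ height, meridianPoint u b ∘ height,
    continuous_meridianPoint.comp hheight, continuous_meridianPoint.comp hheight,
    fun t ht => ⟨norm_meridianPoint hu ha hua (hmem t ht).2,
      norm_meridianPoint hu hb (hab ▸ hua) (hmem t ht).2⟩,
    by simpa [height] using meridianPoint_inner hua,
    by simpa [height, hab] using meridianPoint_inner (hab ▸ hua),
    fun t ht => ?_, by simp [height, meridianPoint_one]⟩
  have hchord : segment ℝ (meridianPoint u a (height t)) (meridianPoint u b (height t)) ⊆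
      {z | ξ ≤ ⟪u, z⟫} :=
    (convex_halfSpace_ge (innerₛₗ ℝ u).isLinear ξ).segment_subset
      (by simp [inner_meridianPoint hu, (hmem t ht).1])
      (by simp [inner_meridianPoint hu, (hmem t ht).1])
  exact disjoint_left.2 fun z hz hzK => (hK z hzK).not_ge (hchord hz)

theorem chord_deformation_to_boundary_general {n : ℕ} (hn : 2 ≤ n)
    (K : Set (EuclideanSpace ℝ (Fin n)))
    (hKcl : IsClosed K) (hKcv : Convex ℝ K)
    (x : EuclideanSpace ℝ (Fin n))
    (hx : x ∈ Metric.closedBall (0 : EuclideanSpace ℝ (Fin n)) 1 \ K) :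
    ∃ a b : ℝ → EuclideanSpace ℝ (Fin n),
      ContinuousOn a (Set.Icc 0 1) ∧ ContinuousOn b (Set.Icc 0 1) ∧
      (∀ t ∈ Set.Icc (0:ℝ) 1, ‖a t‖ = 1 ∧ ‖b t‖ = 1) ∧
      x ∈ segment ℝ (a 0) (b 0) ∧
      (∀ t ∈ Set.Icc (0:ℝ) 1, Disjoint (segment ℝ (a t) (b t)) K) ∧
      a 1 = b 1 := by
  obtain ⟨hxB, hxK⟩ := hx
  rw [mem_closedBall_zero_iff] at hxB
  rcases hxB.eq_or_lt with hx₁ | hx₁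
  · exact ⟨fun _ => x, fun _ => x, continuousOn_const, continuousOn_const,
      fun _ _ => ⟨hx₁, hx₁⟩, by simp, fun _ _ => by simpa [segment_same] using hxK, rfl⟩
  have hE : 2 ≤ Module.finrank ℝ (EuclideanSpace ℝ (Fin n)) := by simpa using hn
  have : Nontrivial (EuclideanSpace ℝ (Fin n)) :=
    Module.nontrivial_of_finrank_pos (R := ℝ) (by omega)
  obtain ⟨u, hu, hK⟩ := exists_unit_inner_lt_of_notMem hKcv hKcl hxK
  obtain ⟨a, b, ha, hb, hua, hub, hxab⟩ := exists_chord_through_in_hyperplane hE u hxB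
  have hξ : |⟪u, a⟫| < 1 := hua ▸ (abs_real_inner_le_norm u x).trans_lt (by rwa [hu, one_mul])
  obtain ⟨A, B, hA, hB, hAB, rfl, rfl, hdisj, h₁⟩ :=
    exists_chord_homotopy_to_point hu ha hb (hua.trans hub.symm) hξ (hua ▸ hK)
  exact ⟨A, B, hA.continuousOn, hB.continuousOn, hAB, hxab, hdisj, h₁⟩

/-- Let `B` be the closed unit ball in `ℝⁿ` (`n ≥ 2`), `K ⊆ int B`
closed and convex, `x ∈ B \ K`. Then a chord of `B` through `x` avoiding `K` can be
continuously deformed, through chords avoiding `K`, to a point of `∂B`: there are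
continuous `a, b : [0,1] → ∂B` with `x` on the chord `[a(0), b(0)]`, every chord
`[a(t), b(t)]` disjoint from `K`, and `a(1) = b(1)`. -/
theorem chord_deformation_to_boundary {n : ℕ} (hn : 2 ≤ n)
    (K : Set (EuclideanSpace ℝ (Fin n)))
    (hKB : K ⊆ Metric.ball 0 1) (hKcl : IsClosed K) (hKcv : Convex ℝ K)
    (x : EuclideanSpace ℝ (Fin n))
    (hx : x ∈ Metric.closedBall (0 : EuclideanSpace ℝ (Fin n)) 1 \ K) :
    ∃ a b : ℝ → EuclideanSpace ℝ (Fin n),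
      ContinuousOn a (Set.Icc 0 1) ∧ ContinuousOn b (Set.Icc 0 1) ∧
      (∀ t ∈ Set.Icc (0:ℝ) 1, ‖a t‖ = 1 ∧ ‖b t‖ = 1) ∧
      x ∈ segment ℝ (a 0) (b 0) ∧
      (∀ t ∈ Set.Icc (0:ℝ) 1, Disjoint (segment ℝ (a t) (b t)) K) ∧
      a 1 = b 1 :=
  chord_deformation_to_boundary_general hn K hKcl hKcv x hx
end
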